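/- The only involutions w in S_n with P_rBS(w) = P_cBS(w)^⊤ are the identity and the transposition (1,2). -/

import Mathlib

namespace GelfandRSK

/-- Schensted insertion of `x` into a single row: replace the first entry greater than `x`,
returning the new row and the bumped entry (if any). -/
def insertRow (r : List ℕ) (x : ℕ) : List ℕ × Option ℕ :=
  match r.findIdx? (fun y => decide (x < y)) with
  | none => (r ++ [x], none)
  | some i => (r.set i x, r[i]?)

/-- Schensted row insertion of `x` into a tableau (list of rows). -/
def rsInsert : List (List ℕ) → ℕ → List (List ℕ)
  | [], x => [[x]]
  | r :: rest, x =>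
    match insertRow r x with
    | (r', none) => r' :: rest
    | (r', some y) => r' :: rsInsert rest y

/-- The (0-indexed) row in which Schensted insertion of `x` adds a new box. -/
def rsBumpRow : List (List ℕ) → ℕ → ℕ
  | [], _ => 0
  | r :: rest, x =>
    match insertRow r x with
    | (_, none) => 0
    | (_, some y) => rsBumpRow rest y + 1

/-- The (0-indexed) column in which Schensted insertion of `x` adds a new box. -/
def rsBumpCol (T : List (List ℕ)) (x : ℕ) : ℕ := (T.getD (rsBumpRow T x) []).length

/-- Add entry `k` at the end of (0-indexed) row `r`. -/
def addAtRow (T : List (List ℕ)) (r : ℕ) (k : ℕ) : List (List ℕ) :=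
  if r < T.length then T.set r (T.getD r [] ++ [k]) else T ++ [[k]]

/-- Add entry `k` at the end of (0-indexed) column `c`. -/
def addAtCol (T : List (List ℕ)) (c : ℕ) (k : ℕ) : List (List ℕ) :=
  addAtRow T (T.findIdx (fun r => decide (r.length ≤ c))) k

/-- The Robinson--Schensted insertion tableau of a word. -/
def PRS (w : List ℕ) : List (List ℕ) := w.foldl rsInsert []

/-- The Robinson--Schensted pair (insertion tableau, recording tableau) of a word. -/
def RSpair (w : List ℕ) : List (List ℕ) × List (List ℕ) :=
  (w.zipIdx.map Prod.swap).foldl (fun pq ix =>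
    (rsInsert pq.1 ix.2, addAtRow pq.2 (rsBumpRow pq.1 ix.2) (ix.1 + 1))) ([], [])

/-- The Robinson--Schensted recording tableau of a word. -/
def QRS (w : List ℕ) : List (List ℕ) := (RSpair w).2

/-- The row reading word: read rows left to right, starting with the last row. -/
def rowWord (T : List (List ℕ)) : List ℕ := T.reverse.flatten

/-- The shape of a tableau: the list of its row lengths. -/
def shape (T : List (List ℕ)) : List ℕ := T.map List.length

/-- Columns of the tableau are strictly increasing downwards. -/
def colStrict (T : List (List ℕ)) : Prop :=
  ∀ i c, i + 1 < T.length → c < (T.getD (i+1) []).length →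
    (T.getD i []).getD c 0 < (T.getD (i+1) []).getD c 0

/-- A partially standard tableau: semistandard, of partition shape, with
distinct positive entries (hence rows and columns strictly increasing). -/
def PartiallyStandard (T : List (List ℕ)) : Prop :=
  (∀ r ∈ T, r ≠ []) ∧
  T.Chain' (fun r₁ r₂ => r₂.length ≤ r₁.length) ∧
  (∀ r ∈ T, r.Chain' (· < ·)) ∧
  colStrict T ∧
  T.flatten.Nodup ∧
  (∀ x ∈ T.flatten, 0 < x)

/-- A standard tableau with `n` boxes: partially standard with entries exactly `1, …, n`. -/
def IsStandardTab (n : ℕ) (T : List (List ℕ)) : Prop :=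
  PartiallyStandard T ∧ T.flatten.Perm (List.range' 1 n)

/-- Row Beissinger insertion of a pair `(a, b)` with `a ≤ b`. -/
def rBS (T : List (List ℕ)) (a b : ℕ) : List (List ℕ) :=
  if a = b then addAtRow T 0 a
  else addAtRow (rsInsert T a) (rsBumpRow T a + 1) b

/-- Column Beissinger insertion of a pair `(a, b)` with `a ≤ b`. -/
def cBS (T : List (List ℕ)) (a b : ℕ) : List (List ℕ) :=
  if a = b then addAtCol T 0 a
  else addAtCol (rsInsert T a) (rsBumpCol T a + 1) b

/-- The function on 0-based indices underlying a permutation of `Fin n`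
(identity outside `[0, n)`). -/
def permFn {n : ℕ} (z : Equiv.Perm (Fin n)) : ℕ → ℕ :=
  fun i => if h : i < n then (z ⟨i, h⟩ : ℕ) else i

/-- The one-line word (with 1-based values) of a function on `[0, m)`. -/
def wordFn (w : ℕ → ℕ) (m : ℕ) : List ℕ := (List.range m).map (fun i => w i + 1)

/-- The one-line word (with 1-based values) of a permutation in `S_n`. -/
def wordOf {n : ℕ} (z : Equiv.Perm (Fin n)) : List ℕ := wordFn (permFn z) n

/-- The 1-based action of a permutation: `act y j = y(j)` in 1-based notation. -/
def act {n : ℕ} (y : Equiv.Perm (Fin n)) (j : ℕ) : ℕ := permFn y (j - 1) + 1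

/-- The 1-based pairs `(a, b)` with `a ≤ b = z(a)` of an involution,
listed in increasing order of `b`. -/
def invPairsFn (w : ℕ → ℕ) (m : ℕ) : List (ℕ × ℕ) :=
  ((List.range m).filter (fun b => decide (w b ≤ b))).map (fun b => (w b + 1, b + 1))

/-- Row Beissinger correspondence applied to an involution given as a function on `[0, m)`. -/
def PrBSfn (w : ℕ → ℕ) (m : ℕ) : List (List ℕ) :=
  (invPairsFn w m).foldl (fun T p => rBS T p.1 p.2) []

/-- Column Beissinger correspondence applied to an involution given as a function on `[0, m)`. -/
def PcBSfn (w : ℕ → ℕ) (m : ℕ) : List (List ℕ) :=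
  (invPairsFn w m).foldl (fun T p => cBS T p.1 p.2) []

/-- The row Beissinger tableau of an involution in `S_n`. -/
def PrBS {n : ℕ} (z : Equiv.Perm (Fin n)) : List (List ℕ) := PrBSfn (permFn z) n

/-- The column Beissinger tableau of an involution in `S_n`. -/
def PcBS {n : ℕ} (z : Equiv.Perm (Fin n)) : List (List ℕ) := PcBSfn (permFn z) n

/-- The transpose of a tableau. -/
def transposeT (T : List (List ℕ)) : List (List ℕ) :=
  (List.range (T.headD []).length).map (fun c => T.filterMap (fun r => r[c]?))

/-- The length of (0-indexed) column `c`. -/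
def colLen (T : List (List ℕ)) (c : ℕ) : ℕ := (T.filter (fun r => decide (c < r.length))).length

/-- The number of columns of odd length. -/
def oddColCount (T : List (List ℕ)) : ℕ :=
  ((List.range (T.headD []).length).filter (fun c => decide (colLen T c % 2 = 1))).length

/-- The number of rows of odd length. -/
def oddRowCount (T : List (List ℕ)) : ℕ :=
  (T.filter (fun r => decide (r.length % 2 = 1))).length

/-- Apply a function to every entry of a tableau. -/
def applyEntries (f : ℕ → ℕ) (T : List (List ℕ)) : List (List ℕ) := T.map (List.map f)

/-- The transposition of values `j` and `j+1`. -/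
def swapVals (j : ℕ) : ℕ → ℕ := fun x => if x = j then j + 1 else if x = j + 1 then j else x

/-- The elementary dual equivalence operator `D_i` acting on a tableau
containing the entries `i-1`, `i`, `i+1`, defined via the row reading word. -/
def Dop (i : ℕ) (T : List (List ℕ)) : List (List ℕ) :=
  let w := rowWord T
  let p : ℕ → ℕ := fun v => w.idxOf v
  if (p i < p (i+1) ∧ p (i+1) < p (i-1)) ∨ (p (i-1) < p (i+1) ∧ p (i+1) < p i) then
    applyEntries (swapVals (i-1)) T
  else if (p i < p (i-1) ∧ p (i-1) < p (i+1)) ∨ (p (i+1) < p (i-1) ∧ p (i-1) < p i) then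
    applyEntries (swapVals i) T
  else T

/-- `x` lies strictly between `u` and `v`. -/
def Btwn {α : Type*} [LT α] (x u v : α) : Prop := (u < x ∧ x < v) ∨ (v < x ∧ x < u)

/-- Exchange the entries at 0-based positions `p` and `q` of a word. -/
def swapPos (u : List ℕ) (p q : ℕ) : List ℕ := (u.set p (u.getD q 0)).set q (u.getD p 0)

/-- The Knuth move relation at 1-based position `i` on words: either the word is
unchanged and the letters at positions `i-1, i, i+1` are monotone, or the letters at
positions `i-1, i` are exchanged (when the letter at position `i+1` is between them),
or the letters at positions `i, i+1` are exchanged (when the letter at position `i-1`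
is between them). -/
def KnuthRelW (i : ℕ) (u v : List ℕ) : Prop :=
  (v = u ∧ ((u.getD (i-2) 0 < u.getD (i-1) 0 ∧ u.getD (i-1) 0 < u.getD i 0) ∨
            (u.getD i 0 < u.getD (i-1) 0 ∧ u.getD (i-1) 0 < u.getD (i-2) 0))) ∨
  (Btwn (u.getD i 0) (u.getD (i-2) 0) (u.getD (i-1) 0) ∧ v = swapPos u (i-2) (i-1)) ∨
  (Btwn (u.getD (i-2) 0) (u.getD (i-1) 0) (u.getD i 0) ∧ v = swapPos u (i-1) i)

/-- The Knuth move relation at position `i` on permutations. -/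
def KnuthRel {n : ℕ} (i : ℕ) (v w : Equiv.Perm (Fin n)) : Prop :=
  KnuthRelW i (wordOf v) (wordOf w)

/-- The dual Knuth move relation at position `i` on permutations. -/
def DualKnuthRel {n : ℕ} (i : ℕ) (v w : Equiv.Perm (Fin n)) : Prop :=
  KnuthRelW i (wordOf v⁻¹) (wordOf w⁻¹)

/-- Knuth equivalence of permutations. -/
def KnuthEquiv {n : ℕ} (v w : Equiv.Perm (Fin n)) : Prop :=
  Relation.ReflTransGen (fun a b => ∃ i, 1 < i ∧ i < n ∧ KnuthRel i a b) v w

/-- Dual Knuth equivalence of permutations. -/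
def DualKnuthEquiv {n : ℕ} (v w : Equiv.Perm (Fin n)) : Prop :=
  Relation.ReflTransGen (fun a b => ∃ i, 1 < i ∧ i < n ∧ DualKnuthRel i a b) v w

/-- The 0-based fixed points of a permutation, in increasing order. -/
def fixList {n : ℕ} (z : Equiv.Perm (Fin n)) : List ℕ :=
  ((List.finRange n).filter (fun c => decide (z c = c))).map Fin.val

/-- The ascending embedding `ι_asc` of involutions of `[n]` into fixed-point-free
involutions of `[2n]`, as a function on 0-based indices. -/
def iotaAsc {n : ℕ} (z : Equiv.Perm (Fin n)) : ℕ → ℕ := fun i =>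
  let F := fixList z
  if h : i < n then
    if z ⟨i, h⟩ = ⟨i, h⟩ then n + F.idxOf i else (z ⟨i, h⟩ : ℕ)
  else if i < n + F.length then F.getD (i - n) 0
  else if i % 2 = 0 then i + 1 else i - 1

/-- The descending embedding `ι_des` of involutions of `[n]` into fixed-point-free
involutions of `[2n]`, as a function on 0-based indices. -/
def iotaDes {n : ℕ} (z : Equiv.Perm (Fin n)) : ℕ → ℕ := fun i =>
  let F := fixList z
  if h : i < n then
    if z ⟨i, h⟩ = ⟨i, h⟩ then n + F.length - 1 - F.idxOf i else (z ⟨i, h⟩ : ℕ)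
  else if i < n + F.length then F.getD (n + F.length - 1 - i) 0
  else if i % 2 = 0 then i + 1 else i - 1

/-- The number of inversions of a function on `[0, m)`. -/
def lenFn (w : ℕ → ℕ) (m : ℕ) : ℕ :=
  ((Finset.range m ×ˢ Finset.range m).filter (fun p => p.1 < p.2 ∧ w p.2 < w p.1)).card

/-- Weak descents (0-based indices `i` with `0 ≤ i < n-1`). -/
def wDesEq (w : ℕ → ℕ) (n : ℕ) : Finset ℕ :=
  (Finset.range (n-1)).filter (fun i => w i = i + 1 ∧ w (i+1) = i)

/-- Weak ascents. -/
def wAscEq (w : ℕ → ℕ) (n : ℕ) : Finset ℕ :=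
  (Finset.range (n-1)).filter (fun i => n ≤ w i ∧ n ≤ w (i+1))

/-- Strict descents. -/
def wDesLt (w : ℕ → ℕ) (n : ℕ) : Finset ℕ :=
  ((Finset.range (n-1)).filter (fun i => w (i+1) < w i)) \ (wAscEq w n ∪ wDesEq w n)

/-- Strict ascents. -/
def wAscLt (w : ℕ → ℕ) (n : ℕ) : Finset ℕ :=
  ((Finset.range (n-1)).filter (fun i => w i < w (i+1))) \ wAscEq w n

/-- Delete all boxes of `T` whose entry exceeds `n`. -/
def restrictT (T : List (List ℕ)) (n : ℕ) : List (List ℕ) :=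
  (T.map (fun r => r.filter (fun x => decide (x ≤ n)))).filter (fun r => !r.isEmpty)

/-- The 0-based indices of the odd columns of `T`, in increasing order. -/
def oddColsList (T : List (List ℕ)) : List ℕ :=
  (List.range (T.headD []).length).filter (fun c => decide (colLen T c % 2 = 1))

/-- Given a standard tableau `T` with `n` boxes and `k` odd columns, place
`n+1, …, n+k` at the bottoms of the odd columns from left to right, then add
`n+k+1, n+k+3, …, 2n-1` to the first row and `n+k+2, n+k+4, …, 2n` to the second row. -/
def iotaRow (n : ℕ) (T : List (List ℕ)) : List (List ℕ) :=
  let cols := oddColsList T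
  let k := cols.length
  let T1 := (cols.zipIdx.map Prod.swap).foldl (fun S ci => addAtCol S ci.2 (n + 1 + ci.1)) T
  let T2 := (List.range ((n - k) / 2)).foldl (fun S m => addAtRow S 0 (n + k + 1 + 2*m)) T1
  (List.range ((n - k) / 2)).foldl (fun S m => addAtRow S 1 (n + k + 2 + 2*m)) T2

/-- The number of transfer points: 0-based `i < n` with `w i ≥ n` (1-based `w(i) > n`). -/
def transferCount (w : ℕ → ℕ) (n : ℕ) : ℕ :=
  ((List.range n).filter (fun i => decide (n ≤ w i))).length

/-- `G^asc_n`: the image of the ascending embedding. -/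
def GAsc (n : ℕ) : Set (ℕ → ℕ) := {f | ∃ w : Equiv.Perm (Fin n), w * w = 1 ∧ f = iotaAsc w}

/-- `G^des_n`: the image of the descending embedding. -/
def GDes (n : ℕ) : Set (ℕ → ℕ) := {f | ∃ w : Equiv.Perm (Fin n), w * w = 1 ∧ f = iotaDes w}

/-- The value `e(j)` from the statement of Theorem on column Beissinger dual
equivalence: for 1-based `j`, `e(j) = -j` if `y(j) = j`; `e(j) = j` if
`j ≠ y(j) ∈ {i-1, i, i+1}`; and `e(j) = y(j)` otherwise. -/
def eVal {n : ℕ} (y : Equiv.Perm (Fin n)) (i j : ℕ) : ℤ :=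
  if act y j = j then -(j : ℤ)
  else if act y j ∈ ({i-1, i, i+1} : Finset ℕ) then (j : ℤ)
  else (act y j : ℤ)

/-- Schensted column insertion, via the transpose. -/
def colInsertT (T : List (List ℕ)) (x : ℕ) : List (List ℕ) :=
  transposeT (rsInsert (transposeT T) x)

/-- The (0-indexed) row in which Schensted column insertion of `x` adds a box. -/
def colBumpRow (T : List (List ℕ)) (x : ℕ) : ℕ := rsBumpCol (transposeT T) x

/-- The alternative column Beissinger insertion `T ⇐cBS (a,b)`: if `a = b`, add `a`
at the end of the first row; if `a < b`, column insert `a` (adding a box in row `i`)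
and add `b` at the end of row `i+1`. -/
def cBSalt (T : List (List ℕ)) (a b : ℕ) : List (List ℕ) :=
  if a = b then addAtRow T 0 a
  else addAtRow (colInsertT T a) (colBumpRow T a + 1) b


/-!
Both tableaux are built by inserting the pairs `(a, b)` of `w` in increasing order of `b`. Fix a
level `j`: a pair with `a > j` never moves an entry `≤ j`, so it suffices to follow the small
entries, in the first row of `P_rBS(w)` (`FirstRowSplit`) and in all of `P_cBS(w)` (`LowPart`).
If `w(1) ≤ 2`, let `k + 1` be the first point after `w(1)` that `w` moves. Then `w` acts on `[k]`
as `1` or `(1,2)`, so the tableaux built from the pairs inside `[k]` are transposes of each other,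
and `k + 1` is the next value `≤ k + 1` to be inserted: it lands in the first row of both
tableaux, hence not in the first column of `P_cBS(w)`. If `w(1) > 2`, then `2` lies in the first
row of `P_rBS(w)` exactly when `1` is inserted before `2`, but in the first column of `P_cBS(w)`
exactly when `2` is inserted first.
-/

theorem insertRow_cons (y : ℕ) (t : List ℕ) (x : ℕ) :
    insertRow (y :: t) x =
      if x < y then (x :: t, some y) else (y :: (insertRow t x).1, (insertRow t x).2) := by
  unfold insertRow
  rw [List.findIdx?_cons]
  by_cases h : x < y
  · simp [h]
  · cases List.findIdx? (fun y => decide (x < y)) t <;> simp [h]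

theorem insertRow_fst_ne_nil (t : List ℕ) (x : ℕ) : (insertRow t x).1 ≠ [] := by
  cases t with
  | nil => simp [insertRow]
  | cons y t => rw [insertRow_cons]; split <;> simp

theorem eq_or_mem_of_mem_insertRow_fst {t : List ℕ} {x y : ℕ} (h : y ∈ (insertRow t x).1) :
    y = x ∨ y ∈ t := by
  induction t with
  | nil => simpa [insertRow] using h
  | cons z t ih =>
    rw [insertRow_cons] at h
    split_ifs at h
    · rcases List.mem_cons.mp h with rfl | h
      exacts [Or.inl rfl, Or.inr (List.mem_cons_of_mem _ h)]
    · rcases List.mem_cons.mp h with rfl | h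
      exacts [Or.inr List.mem_cons_self, (ih h).imp_right (List.mem_cons_of_mem _)]

theorem mem_of_insertRow_snd_eq_some {t : List ℕ} {x y : ℕ} (h : (insertRow t x).2 = some y) :
    y ∈ t := by
  induction t with
  | nil => simp [insertRow] at h
  | cons z t ih =>
    rw [insertRow_cons] at h
    split_ifs at h
    · simp_all
    · exact List.mem_cons_of_mem _ (ih h)

theorem insertRow_append_of_forall_le {p : List ℕ} {x : ℕ} (hp : ∀ y ∈ p, y ≤ x) (e : List ℕ) :
    insertRow (p ++ e) x = (p ++ (insertRow e x).1, (insertRow e x).2) := by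
  induction p with
  | nil => simp
  | cons z p ih =>
    rw [List.cons_append, insertRow_cons, if_neg (by simp at hp; omega),
      ih fun y hy => hp y (List.mem_cons_of_mem _ hy)]
    simp

theorem insertRow_of_forall_lt {e : List ℕ} {x : ℕ} (he : ∀ y ∈ e, x < y) :
    insertRow e x = (x :: e.tail, e.head?) := by
  cases e with
  | nil => rfl
  | cons z t => rw [insertRow_cons, if_pos (he z (by simp))]; rfl

theorem rsInsert_cons (r : List ℕ) (T : List (List ℕ)) (x : ℕ) :
    rsInsert (r :: T) x = (insertRow r x).1 :: (insertRow r x).2.elim T (rsInsert T) := by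
  unfold rsInsert
  rcases insertRow r x with ⟨r', _ | y⟩ <;> rfl

theorem rsInsert_ne_nil (T : List (List ℕ)) (x : ℕ) : rsInsert T x ≠ [] := by
  cases T with
  | nil => simp [rsInsert]
  | cons r T => simp [rsInsert_cons]

theorem headD_rsInsert (T : List (List ℕ)) (x : ℕ) :
    (rsInsert T x).headD [] = (insertRow (T.headD []) x).1 := by
  cases T with
  | nil => rfl
  | cons r T => simp [rsInsert_cons]

theorem addAtRow_cons_zero (r : List ℕ) (T : List (List ℕ)) (k : ℕ) :
    addAtRow (r :: T) 0 k = (r ++ [k]) :: T := by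
  simp [addAtRow]

theorem addAtRow_cons_succ (r : List ℕ) (T : List (List ℕ)) (i k : ℕ) :
    addAtRow (r :: T) (i + 1) k = r :: addAtRow T i k := by
  unfold addAtRow
  by_cases h : i < T.length <;> simp [h]

theorem addAtRow_ne_nil (T : List (List ℕ)) (i k : ℕ) : addAtRow T i k ≠ [] := by
  unfold addAtRow
  split
  · exact List.ne_nil_of_length_pos (by simp; omega)
  · simp

theorem headD_rBS (T : List (List ℕ)) (a b : ℕ) :
    (rBS T a b).headD [] =
      if a = b then T.headD [] ++ [a] else (insertRow (T.headD []) a).1 := by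
  unfold rBS
  split
  · cases T <;> simp [addAtRow]
  · obtain ⟨r, T', hT⟩ := List.exists_cons_of_ne_nil (rsInsert_ne_nil T a)
    rw [← headD_rsInsert, hT, addAtRow_cons_succ]
    rfl

def PairsAbove (j : ℕ) (L : List (ℕ × ℕ)) : Prop := ∀ q ∈ L, j < q.1 ∧ q.1 ≤ q.2

abbrev rBSFold (T : List (List ℕ)) (L : List (ℕ × ℕ)) : List (List ℕ) :=
  L.foldl (fun T q => rBS T q.1 q.2) T

abbrev cBSFold (T : List (List ℕ)) (L : List (ℕ × ℕ)) : List (List ℕ) :=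
  L.foldl (fun T q => cBS T q.1 q.2) T

theorem rBSFold_cons (T : List (List ℕ)) (q : ℕ × ℕ) (L : List (ℕ × ℕ)) :
    rBSFold T (q :: L) = rBSFold (rBS T q.1 q.2) L := rfl

theorem cBSFold_cons (T : List (List ℕ)) (q : ℕ × ℕ) (L : List (ℕ × ℕ)) :
    cBSFold T (q :: L) = cBSFold (cBS T q.1 q.2) L := rfl

theorem rBSFold_append (T : List (List ℕ)) (L₁ L₂ : List (ℕ × ℕ)) :
    rBSFold T (L₁ ++ L₂) = rBSFold (rBSFold T L₁) L₂ := List.foldl_append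

theorem cBSFold_append (T : List (List ℕ)) (L₁ L₂ : List (ℕ × ℕ)) :
    cBSFold T (L₁ ++ L₂) = cBSFold (cBSFold T L₁) L₂ := List.foldl_append

theorem rBSFold_append_cons (T : List (List ℕ)) (L₁ L₂ : List (ℕ × ℕ)) (q : ℕ × ℕ) :
    rBSFold T (L₁ ++ q :: L₂) = rBSFold (rBS (rBSFold T L₁) q.1 q.2) L₂ := by
  rw [rBSFold_append, rBSFold_cons]

theorem cBSFold_append_cons (T : List (List ℕ)) (L₁ L₂ : List (ℕ × ℕ)) (q : ℕ × ℕ) :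
    cBSFold T (L₁ ++ q :: L₂) = cBSFold (cBS (cBSFold T L₁) q.1 q.2) L₂ := by
  rw [cBSFold_append, cBSFold_cons]

theorem cBSFold_ne_nil : ∀ {L : List (ℕ × ℕ)} (T : List (List ℕ)), L ≠ [] → cBSFold T L ≠ []
  | [q], T, _ => by
    show cBS T q.1 q.2 ≠ []
    unfold cBS addAtCol
    split <;> exact addAtRow_ne_nil _ _ _
  | q :: q' :: L, T, _ => cBSFold_ne_nil (L := q' :: L) (cBS T q.1 q.2) (List.cons_ne_nil _ _)

theorem PairsAbove.of_cons {j : ℕ} {q : ℕ × ℕ} {L : List (ℕ × ℕ)} (h : PairsAbove j (q :: L)) :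
    PairsAbove j L :=
  fun q' hq' => h q' (List.mem_cons_of_mem _ hq')

def FirstRowSplit (j : ℕ) (p : List ℕ) (T : List (List ℕ)) : Prop :=
  ∃ e, T.headD [] = p ++ e ∧ ∀ y ∈ e, j < y

theorem headD_rBS_of_split {T : List (List ℕ)} {p e : List ℕ} {x b : ℕ}
    (hT : T.headD [] = p ++ e) (hp : ∀ y ∈ p, y ≤ x) (he : ∀ y ∈ e, x < y) (hxb : x ≠ b) :
    (rBS T x b).headD [] = p ++ x :: e.tail := by
  rw [headD_rBS, if_neg hxb, hT, insertRow_append_of_forall_le hp, insertRow_of_forall_lt he]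

theorem FirstRowSplit.rBS_of_lt {j a b : ℕ} {p : List ℕ} {T : List (List ℕ)}
    (h : FirstRowSplit j p T) (hp : ∀ y ∈ p, y ≤ j) (ha : j < a) :
    FirstRowSplit j p (rBS T a b) := by
  obtain ⟨e, hT, he⟩ := h
  have hpa : ∀ y ∈ p, y ≤ a := fun y hy => (hp y hy).trans ha.le
  rw [FirstRowSplit, headD_rBS, hT]
  split
  · refine ⟨e ++ [a], by simp, fun y hy => ?_⟩
    rcases List.mem_append.mp hy with hy | hy
    exacts [he y hy, List.eq_of_mem_singleton hy ▸ ha]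
  · refine ⟨_, by rw [insertRow_append_of_forall_le hpa], fun y hy => ?_⟩
    rcases eq_or_mem_of_mem_insertRow_fst hy with rfl | hy
    exacts [ha, he y hy]

theorem FirstRowSplit.rBSFold_of_pairsAbove {j : ℕ} {p : List ℕ} (hp : ∀ y ∈ p, y ≤ j) :
    ∀ {L : List (ℕ × ℕ)} {T : List (List ℕ)}, FirstRowSplit j p T → PairsAbove j L →
      FirstRowSplit j p (rBSFold T L)
  | [], _, h, _ => h
  | q :: _, T, h, hL =>
    FirstRowSplit.rBSFold_of_pairsAbove hp (T := rBS T q.1 q.2)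
      (h.rBS_of_lt hp (hL q (by simp)).1) hL.of_cons

theorem FirstRowSplit.rBS_of_le {j x b : ℕ} {p : List ℕ} {T : List (List ℕ)}
    (h : FirstRowSplit j p T) (hp : ∀ y ∈ p, y ≤ x) (hxj : x ≤ j) (hxb : x ≠ b) :
    FirstRowSplit j (p ++ [x]) (rBS T x b) := by
  obtain ⟨e, hT, he⟩ := h
  have hex : ∀ y ∈ e, x < y := fun y hy => lt_of_le_of_lt hxj (he y hy)
  exact ⟨e.tail, by rw [headD_rBS_of_split hT hp hex hxb]; simp,
    fun y hy => he y (List.mem_of_mem_tail hy)⟩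

def RowsIn (s : Set ℕ) (T : List (List ℕ)) : Prop := ∀ r ∈ T, r ≠ [] ∧ ∀ y ∈ r, y ∈ s

theorem RowsIn.rsInsert_of_mem {s : Set ℕ} :
    ∀ {T : List (List ℕ)} {x : ℕ}, RowsIn s T → x ∈ s → RowsIn s (rsInsert T x)
  | [], x, _, hx => by simpa [rsInsert, RowsIn] using hx
  | r :: T, x, h, hx => by
    have hr := h r (by simp)
    have hT : RowsIn s T := fun r' hr' => h r' (by simp [hr'])
    rw [rsInsert_cons]
    intro r' hr'
    rcases List.mem_cons.mp hr' with rfl | hr'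
    · refine ⟨insertRow_fst_ne_nil r x, fun y hy => ?_⟩
      rcases eq_or_mem_of_mem_insertRow_fst hy with rfl | hy
      exacts [hx, hr.2 y hy]
    · cases hy : (insertRow r x).2 with
      | none => rw [hy] at hr'; exact hT r' hr'
      | some y =>
        rw [hy] at hr'
        exact RowsIn.rsInsert_of_mem hT (hr.2 y (mem_of_insertRow_snd_eq_some hy)) r' hr'

theorem RowsIn.addAtRow_of_mem {s : Set ℕ} {T : List (List ℕ)} {k : ℕ} (h : RowsIn s T)
    (hk : k ∈ s) (i : ℕ) : RowsIn s (addAtRow T i k) := by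
  unfold addAtRow
  split
  · intro r hr
    rcases List.mem_or_eq_of_mem_set hr with hr | rfl
    · exact h r hr
    · refine ⟨by simp, fun y hy => ?_⟩
      rcases List.mem_append.mp hy with hy | hy
      · exact (h _ (List.getD_eq_getElem _ _ (by assumption) ▸ List.getElem_mem _)).2 y hy
      · exact List.eq_of_mem_singleton hy ▸ hk
  · intro r hr
    rcases List.mem_append.mp hr with hr | hr
    · exact h r hr
    · simp only [List.mem_singleton] at hr; subst hr
      simpa using hk

theorem RowsIn.cBS_of_mem {s : Set ℕ} {T : List (List ℕ)} {a b : ℕ} (h : RowsIn s T)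
    (ha : a ∈ s) (hb : b ∈ s) : RowsIn s (cBS T a b) := by
  unfold cBS addAtCol
  split
  · exact h.addAtRow_of_mem ha _
  · exact (h.rsInsert_of_mem ha).addAtRow_of_mem hb _

theorem RowsIn.cBSFold_of_mem {s : Set ℕ} :
    ∀ {L : List (ℕ × ℕ)} {T : List (List ℕ)}, RowsIn s T → (∀ q ∈ L, q.1 ∈ s ∧ q.2 ∈ s) →
      RowsIn s (cBSFold T L)
  | [], _, h, _ => h
  | q :: _, T, h, hL =>
    RowsIn.cBSFold_of_mem (T := cBS T q.1 q.2)
      (h.cBS_of_mem (hL q (by simp)).1 (hL q (by simp)).2)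
      fun q' hq' => hL q' (List.mem_cons_of_mem _ hq')

/-- When the entries of `P` are at most `j`, `P` is what remains of `T` after deleting its
entries larger than `j`, each row of `P` being a prefix of the corresponding row of `T`. -/
def LowPart (j : ℕ) : List (List ℕ) → List (List ℕ) → Prop
  | [], T => RowsIn (Set.Ioi j) T
  | p :: P, T => ∃ e T', T = (p ++ e) :: T' ∧ p ++ e ≠ [] ∧ (∀ y ∈ e, j < y) ∧ LowPart j P T'

theorem LowPart.ne_nil_of_mem {j : ℕ} :
    ∀ {P T : List (List ℕ)}, LowPart j P T → ∀ r ∈ T, r ≠ []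
  | [], _, h, r, hr => (h r hr).1
  | _ :: _, _, ⟨_, _, rfl, hne, _, hP⟩, r, hr => by
    rcases List.mem_cons.mp hr with rfl | hr
    exacts [hne, LowPart.ne_nil_of_mem hP r hr]

theorem lowPart_self (j : ℕ) : ∀ {T : List (List ℕ)}, (∀ r ∈ T, r ≠ []) → LowPart j T T
  | [], _ => fun r hr => by simp at hr
  | r :: _, h => ⟨[], _, by simp, by simpa using h r (by simp), by simp,
      lowPart_self j fun r' hr' => h r' (by simp [hr'])⟩

theorem LowPart.rsInsert_of_lt {j : ℕ} :
    ∀ {P T : List (List ℕ)} {x : ℕ}, (∀ r ∈ P, ∀ y ∈ r, y ≤ j) → LowPart j P T → j < x →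
      LowPart j P (rsInsert T x)
  | [], _, _, _, h, hx => RowsIn.rsInsert_of_mem h hx
  | p :: P, _, x, hP, ⟨e, T', rfl, _, he, hT'⟩, hx => by
    have hpx : ∀ y ∈ p, y ≤ x := fun y hy => (hP p (by simp) y hy).trans hx.le
    rw [rsInsert_cons, insertRow_append_of_forall_le hpx]
    refine ⟨_, _, rfl, by simp [insertRow_fst_ne_nil], fun y hy => ?_, ?_⟩
    · rcases eq_or_mem_of_mem_insertRow_fst hy with rfl | hy
      exacts [hx, he y hy]
    · cases hy : (insertRow e x).2 with
      | none => exact hT'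
      | some y =>
        exact LowPart.rsInsert_of_lt (fun r hr => hP r (by simp [hr])) hT'
          (he y (mem_of_insertRow_snd_eq_some hy))

theorem LowPart.addAtRow_of_lt {j b : ℕ} (hb : j < b) :
    ∀ {P T : List (List ℕ)} (i : ℕ), LowPart j P T → LowPart j P (addAtRow T i b)
  | [], _, i, h => RowsIn.addAtRow_of_mem h hb i
  | p :: P, _, 0, ⟨e, T', rfl, _, he, hT'⟩ => by
    rw [addAtRow_cons_zero]
    refine ⟨e ++ [b], T', by simp, by simp, fun y hy => ?_, hT'⟩
    rcases List.mem_append.mp hy with hy | hy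
    exacts [he y hy, List.eq_of_mem_singleton hy ▸ hb]
  | p :: P, _, i + 1, ⟨e, T', rfl, hne, he, hT'⟩ => by
    rw [addAtRow_cons_succ]
    exact ⟨e, _, rfl, hne, he, LowPart.addAtRow_of_lt hb i hT'⟩

theorem LowPart.cBS_of_lt {j a b : ℕ} {P T : List (List ℕ)} (hP : ∀ r ∈ P, ∀ y ∈ r, y ≤ j)
    (h : LowPart j P T) (ha : j < a) (hab : a ≤ b) : LowPart j P (cBS T a b) := by
  unfold cBS addAtCol
  split
  · exact h.addAtRow_of_lt ha _
  · exact (h.rsInsert_of_lt hP ha).addAtRow_of_lt (ha.trans_le hab) _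

theorem LowPart.cBSFold_of_pairsAbove {j : ℕ} {P : List (List ℕ)}
    (hP : ∀ r ∈ P, ∀ y ∈ r, y ≤ j) :
    ∀ {L : List (ℕ × ℕ)} {T : List (List ℕ)}, LowPart j P T → PairsAbove j L →
      LowPart j P (cBSFold T L)
  | [], _, h, _ => h
  | q :: _, T, h, hL =>
    LowPart.cBSFold_of_pairsAbove hP (T := cBS T q.1 q.2)
      (h.cBS_of_lt hP (hL q (by simp)).1 (hL q (by simp)).2) hL.of_cons

theorem LowPart.cBS_of_rsInsert {j x b : ℕ} {P T : List (List ℕ)}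
    (h : LowPart j P (rsInsert T x)) (hb : j < b) (hxb : x ≠ b) : LowPart j P (cBS T x b) := by
  unfold cBS addAtCol
  rw [if_neg hxb]
  exact h.addAtRow_of_lt hb _

theorem RowsIn.lowPart_rsInsert {j x : ℕ} {T : List (List ℕ)} (h : RowsIn (Set.Ioi j) T)
    (hx : x ≤ j) : LowPart j [[x]] (rsInsert T x) := by
  cases T with
  | nil => exact ⟨[], [], rfl, by simp, by simp, fun r hr => by simp at hr⟩
  | cons r T =>
    obtain ⟨hne, hr⟩ := h r (by simp)
    obtain ⟨z, t, rfl⟩ := List.exists_cons_of_ne_nil hne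
    have hz : j < z := hr z (by simp)
    rw [rsInsert_cons, insertRow_of_forall_lt fun y hy => hx.trans_lt (hr y hy)]
    exact ⟨t, _, rfl, by simp, fun y hy => hr y (by simp [hy]),
      RowsIn.rsInsert_of_mem (fun r' hr' => h r' (by simp [hr'])) hz⟩

theorem LowPart.rsInsert_below {j v x : ℕ} {T : List (List ℕ)} (h : LowPart j [[v]] T)
    (hxv : x < v) (hv : v ≤ j) : LowPart j [[x], [v]] (rsInsert T x) := by
  obtain ⟨e, T', rfl, -, he, hT'⟩ := h
  have hx : ∀ y ∈ [v] ++ e, x < y := by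
    intro y hy
    rcases List.mem_append.mp hy with hy | hy
    exacts [List.eq_of_mem_singleton hy ▸ hxv, by have := he y hy; omega]
  rw [rsInsert_cons, insertRow_of_forall_lt hx]
  exact ⟨e, _, rfl, by simp, he, hT'.lowPart_rsInsert hv⟩

theorem LowPart.rsInsert_level {j : ℕ} {p : List ℕ} {P T : List (List ℕ)}
    (h : LowPart j (p :: P) T) (hp : ∀ y ∈ p, y ≤ j) (hP : ∀ r ∈ P, ∀ y ∈ r, y ≤ j) :
    LowPart j ((p ++ [j]) :: P) (rsInsert T j) := by
  obtain ⟨e, T', rfl, -, he, hT'⟩ := h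
  rw [rsInsert_cons, insertRow_append_of_forall_le hp, insertRow_of_forall_lt he]
  cases e with
  | nil => exact ⟨[], T', by simp, by simp, by simp, hT'⟩
  | cons z t =>
    exact ⟨t, _, by simp, by simp, fun y hy => he y (by simp [hy]),
      hT'.rsInsert_of_lt hP (he z (by simp))⟩

theorem headD_transposeT {S : List (List ℕ)} (hS : S ≠ []) (h : ∀ r ∈ S, r ≠ []) :
    (transposeT S).headD [] = S.map (·.headD 0) := by
  obtain ⟨r, S', rfl⟩ := List.exists_cons_of_ne_nil hS
  obtain ⟨z, t, rfl⟩ := List.exists_cons_of_ne_nil (h r (by simp))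
  rw [transposeT, List.headD_cons, List.length_cons, List.range_succ_eq_map, List.map_cons,
    List.headD_cons]
  refine List.filterMap_eq_map_iff_forall_eq_some.mpr fun r hr => ?_
  obtain ⟨z, t, rfl⟩ := List.exists_cons_of_ne_nil (h r hr)
  rfl

theorem LowPart.headD_transposeT {j : ℕ} {p : List ℕ} {P T : List (List ℕ)}
    (h : LowPart j (p :: P) T) : (transposeT T).headD [] = T.map (·.headD 0) := by
  have hT := h.ne_nil_of_mem
  obtain ⟨e, T', rfl, -, -, -⟩ := h
  exact GelfandRSK.headD_transposeT (by simp) hT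

theorem LowPart.lt_of_getElem?_map_headD {j : ℕ} :
    ∀ {P T : List (List ℕ)} {c y : ℕ}, LowPart j P T → P.length ≤ c →
      (T.map (·.headD 0))[c]? = some y → j < y
  | [], T, c, y, h, _, hy => by
    rw [List.getElem?_map, Option.map_eq_some_iff] at hy
    obtain ⟨r, hr, rfl⟩ := hy
    have hr := h r (List.mem_of_getElem? hr)
    obtain ⟨z, t, rfl⟩ := List.exists_cons_of_ne_nil hr.1
    exact hr.2 z (by simp)
  | _ :: _, _, c + 1, _, ⟨_, _, rfl, _, _, hP⟩, hc, hy =>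
    LowPart.lt_of_getElem?_map_headD hP (by simpa using hc) (by simpa using hy)

theorem LowPart.getElem?_map_headD {j : ℕ} :
    ∀ {P T : List (List ℕ)} {c : ℕ}, LowPart j P T → (hc : c < P.length) → P[c] ≠ [] →
      (T.map (·.headD 0))[c]? = some (P[c].headD 0)
  | p :: _, _, 0, ⟨_, _, rfl, _, _, _⟩, _, hp => by
    obtain ⟨z, t, rfl⟩ := List.exists_cons_of_ne_nil hp; rfl
  | _ :: _, _, c + 1, ⟨_, _, rfl, _, _, hP⟩, hc, hp =>
    by simpa using LowPart.getElem?_map_headD hP (by simpa using hc) hp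

theorem rBSFold_ne_transposeT_of_level {j b : ℕ} {p : List ℕ} {P R C : List (List ℕ)}
    {L₁ L₂ : List (ℕ × ℕ)} (hR : FirstRowSplit j p R) (hp : ∀ y ∈ p, y ≤ j)
    (hC : LowPart j P C) (hP : ∀ r ∈ P, ∀ y ∈ r, y ≤ j) (hPne : P ≠ [])
    (hlen : P.length ≤ p.length) (hjb : j < b) (hL₁ : PairsAbove j L₁)
    (hL₂ : PairsAbove j L₂) :
    rBSFold R (L₁ ++ (j, b) :: L₂) ≠ transposeT (cBSFold C (L₁ ++ (j, b) :: L₂)) := by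
  obtain ⟨p₀, P', rfl⟩ := List.exists_cons_of_ne_nil hPne
  have hpj : ∀ y ∈ p ++ [j], y ≤ j := by
    simp only [List.mem_append, List.mem_singleton]
    rintro y (hy | rfl)
    exacts [hp y hy, le_rfl]
  have hP' : ∀ r ∈ (p₀ ++ [j]) :: P', ∀ y ∈ r, y ≤ j := by
    simp only [List.mem_cons]
    rintro r (rfl | hr) y hy
    · rcases List.mem_append.mp hy with hy | hy
      exacts [hP p₀ (by simp) y hy, (List.eq_of_mem_singleton hy).le]
    · exact hP r (by simp [hr]) y hy
  rw [rBSFold_append_cons, cBSFold_append_cons]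
  obtain ⟨e, hRe, -⟩ : FirstRowSplit j (p ++ [j]) (rBSFold (rBS (rBSFold R L₁) j b) L₂) :=
    ((hR.rBSFold_of_pairsAbove hp hL₁).rBS_of_le hp le_rfl hjb.ne).rBSFold_of_pairsAbove hpj hL₂
  have hC' : LowPart j ((p₀ ++ [j]) :: P') (cBSFold (cBS (cBSFold C L₁) j b) L₂) :=
    (((hC.cBSFold_of_pairsAbove hP hL₁).rsInsert_level (hP p₀ (by simp))
      fun r hr => hP r (by simp [hr])).cBS_of_rsInsert hjb hjb.ne).cBSFold_of_pairsAbove hP' hL₂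
  -- `j` is at index `p.length` of the first row on the left, but from index `P.length` on,
  -- the first column of `cBSFold …` only holds entries larger than `j`.
  intro h
  have hrow : ((rBSFold (rBS (rBSFold R L₁) j b) L₂).headD [])[p.length]? = some j := by
    rw [hRe]; simp
  rw [h, hC'.headD_transposeT] at hrow
  exact lt_irrefl j (hC'.lt_of_getElem?_map_headD (by simpa using hlen) hrow)

theorem rBSFold_ne_transposeT_of_below {j v x b : ℕ} {R C : List (List ℕ)}
    {L₁ L₂ : List (ℕ × ℕ)} (hR : FirstRowSplit j [v] R) (hC : LowPart j [[v]] C)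
    (hxv : x < v) (hvj : v ≤ j) (hjb : j < b) (hL₁ : PairsAbove j L₁)
    (hL₂ : PairsAbove j L₂) :
    rBSFold R (L₁ ++ (x, b) :: L₂) ≠ transposeT (cBSFold C (L₁ ++ (x, b) :: L₂)) := by
  have hxj : x ≤ j := by omega
  have hxb : x ≠ b := by omega
  have hP : ∀ r ∈ [[x], [v]], ∀ y ∈ r, y ≤ j := by simp [hxj, hvj]
  rw [rBSFold_append_cons, cBSFold_append_cons]
  obtain ⟨e, hRe, he⟩ := hR.rBSFold_of_pairsAbove (by simpa using hvj) hL₁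
  have hR' : FirstRowSplit j [x] (rBS (rBSFold R L₁) x b) := by
    refine ⟨e, ?_, he⟩
    rw [headD_rBS_of_split (p := []) hRe (by simp) ?_ hxb]
    · rfl
    · intro y hy
      rcases List.mem_cons.mp hy with rfl | hy
      exacts [hxv, by have := he y hy; omega]
  obtain ⟨e', hRe', he'⟩ : FirstRowSplit j [x] (rBSFold (rBS (rBSFold R L₁) x b) L₂) :=
    hR'.rBSFold_of_pairsAbove (by simpa using hxj) hL₂
  have hC' : LowPart j [[x], [v]] (cBSFold (cBS (cBSFold C L₁) x b) L₂) :=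
    (((hC.cBSFold_of_pairsAbove (by simpa using hvj) hL₁).rsInsert_below hxv
      hvj).cBS_of_rsInsert hjb hxb).cBSFold_of_pairsAbove hP hL₂
  intro h
  have hcol := hC'.getElem?_map_headD (c := 1) (by simp) (by simp)
  rw [← hC'.headD_transposeT, ← h, hRe'] at hcol
  have : j < v := he' v (List.mem_of_getElem? (by simpa using hcol))
  omega

theorem FirstRowSplit.rBS_rBSFold_nil {j x b : ℕ} {L : List (ℕ × ℕ)} (hL : PairsAbove j L)
    (hxj : x ≤ j) (hxb : x ≠ b) : FirstRowSplit j [x] (rBS (rBSFold [] L) x b) :=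
  (FirstRowSplit.rBSFold_of_pairsAbove (p := []) (by simp) ⟨[], rfl, by simp⟩ hL).rBS_of_le
    (by simp) hxj hxb

theorem LowPart.cBS_cBSFold_nil {j x b : ℕ} {L : List (ℕ × ℕ)} (hL : PairsAbove j L)
    (hxj : x ≤ j) (hjb : j < b) : LowPart j [[x]] (cBS (cBSFold [] L) x b) := by
  have h : RowsIn (Set.Ioi j) (cBSFold [] L) :=
    LowPart.cBSFold_of_pairsAbove (P := []) (by simp) (fun r hr => by simp at hr) hL
  exact (h.lowPart_rsInsert hxj).cBS_of_rsInsert hjb (by omega)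

theorem rBSFold_ne_transposeT_of_eq_transposeT {j b : ℕ} {R C : List (List ℕ)}
    {L₁ L₂ : List (ℕ × ℕ)} (hRC : R = transposeT C) (hC : C ≠ []) (hCj : RowsIn (Set.Iio j) C)
    (hjb : j < b) (hL₁ : PairsAbove j L₁) (hL₂ : PairsAbove j L₂) :
    rBSFold R (L₁ ++ (j, b) :: L₂) ≠ transposeT (cBSFold C (L₁ ++ (j, b) :: L₂)) := by
  have hne : ∀ r ∈ C, r ≠ [] := fun r hr => (hCj r hr).1
  have hCle : ∀ r ∈ C, ∀ y ∈ r, y ≤ j := fun r hr y hy => ((hCj r hr).2 y hy).le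
  have hheads : ∀ y ∈ C.map (·.headD 0), y ≤ j := by
    simp only [List.mem_map]
    rintro _ ⟨r, hr, rfl⟩
    obtain ⟨z, t, rfl⟩ := List.exists_cons_of_ne_nil (hne r hr)
    exact hCle _ hr z (by simp)
  refine rBSFold_ne_transposeT_of_level ⟨[], ?_, by simp⟩ hheads (lowPart_self j hne) hCle hC
    (by simp) hjb hL₁ hL₂
  rw [hRC, headD_transposeT hC hne, List.append_nil]

theorem rBSFold_ne_transposeT_of_fixed_two {b : ℕ} {L₁ L₂ : List (ℕ × ℕ)} (hb : 2 < b)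
    (hL₁ : PairsAbove 2 L₁) (hL₂ : PairsAbove 2 L₂) :
    rBSFold [] ((2, 2) :: (L₁ ++ (1, b) :: L₂)) ≠
      transposeT (cBSFold [] ((2, 2) :: (L₁ ++ (1, b) :: L₂))) :=
  rBSFold_ne_transposeT_of_below (R := [[2]]) (C := [[2]]) ⟨[], rfl, by simp⟩
    (lowPart_self 2 (by simp)) (by omega) le_rfl hb hL₁ hL₂

theorem rBSFold_ne_transposeT_of_two_before_one {b₀ b₁ : ℕ} {L₀ L₁ L₂ : List (ℕ × ℕ)}
    (hb₀ : 2 < b₀) (hb₁ : 2 < b₁) (hL₀ : PairsAbove 2 L₀) (hL₁ : PairsAbove 2 L₁)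
    (hL₂ : PairsAbove 2 L₂) :
    rBSFold [] (L₀ ++ (2, b₁) :: (L₁ ++ (1, b₀) :: L₂)) ≠
      transposeT (cBSFold [] (L₀ ++ (2, b₁) :: (L₁ ++ (1, b₀) :: L₂))) := by
  rw [rBSFold_append_cons, cBSFold_append_cons]
  exact rBSFold_ne_transposeT_of_below (FirstRowSplit.rBS_rBSFold_nil hL₀ le_rfl (by omega))
    (LowPart.cBS_cBSFold_nil hL₀ le_rfl hb₁) (by omega) le_rfl hb₀ hL₁ hL₂

theorem rBSFold_ne_transposeT_of_one_before_two {b₀ b₁ : ℕ} {L₀ L₁ L₂ : List (ℕ × ℕ)}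
    (hb₀ : 2 < b₀) (hb₁ : 2 < b₁) (hL₀ : PairsAbove 2 L₀) (hL₁ : PairsAbove 2 L₁)
    (hL₂ : PairsAbove 2 L₂) :
    rBSFold [] (L₀ ++ (1, b₀) :: (L₁ ++ (2, b₁) :: L₂)) ≠
      transposeT (cBSFold [] (L₀ ++ (1, b₀) :: (L₁ ++ (2, b₁) :: L₂))) := by
  rw [rBSFold_append_cons, cBSFold_append_cons]
  exact rBSFold_ne_transposeT_of_level (FirstRowSplit.rBS_rBSFold_nil hL₀ (by omega) (by omega))
    (by simp) (LowPart.cBS_cBSFold_nil hL₀ (by omega) hb₀) (by simp) (by simp) le_rfl hb₁ hL₁ hL₂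

theorem range'_eq_append_cons {s t m : ℕ} (h₁ : s ≤ m) (h₂ : m < s + t) :
    List.range' s t = List.range' s (m - s) ++ m :: List.range' (m + 1) (s + t - (m + 1)) := by
  obtain ⟨a, rfl⟩ := Nat.exists_eq_add_of_le h₁
  obtain ⟨b, rfl⟩ : ∃ b, t = a + (b + 1) := ⟨t - a - 1, by omega⟩
  rw [show s + a - s = a by omega, show s + (a + (b + 1)) - (s + a + 1) = b by omega,
    ← List.range'_succ, List.range'_append_1]

theorem range_eq_cons_cons {n : ℕ} (hn : 2 ≤ n) :
    List.range n = 0 :: 1 :: List.range' 2 (n - 2) := by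
  obtain ⟨n, rfl⟩ : ∃ n', n = n' + 2 := ⟨n - 2, by omega⟩
  rw [List.range_eq_range']
  rfl

def invPairsOn (f : ℕ → ℕ) (l : List ℕ) : List (ℕ × ℕ) :=
  (l.filter fun b => decide (f b ≤ b)).map fun b => (f b + 1, b + 1)

theorem invPairsFn_eq_invPairsOn (f : ℕ → ℕ) (n : ℕ) :
    invPairsFn f n = invPairsOn f (List.range n) := rfl

theorem invPairsOn_append (f : ℕ → ℕ) (l₁ l₂ : List ℕ) :
    invPairsOn f (l₁ ++ l₂) = invPairsOn f l₁ ++ invPairsOn f l₂ := by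
  simp [invPairsOn]

theorem invPairsOn_cons_of_le {f : ℕ → ℕ} {i : ℕ} (h : f i ≤ i) (l : List ℕ) :
    invPairsOn f (i :: l) = (f i + 1, i + 1) :: invPairsOn f l := by
  simp [invPairsOn, h]

theorem invPairsOn_cons_of_lt {f : ℕ → ℕ} {i : ℕ} (h : i < f i) (l : List ℕ) :
    invPairsOn f (i :: l) = invPairsOn f l := by
  simp [invPairsOn, Nat.not_le.mpr h]

theorem invPairsOn_of_forall_eq {f : ℕ → ℕ} {l : List ℕ} (h : ∀ i ∈ l, f i = i) :
    invPairsOn f l = (l.map (· + 1)).map fun a => (a, a) := by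
  unfold invPairsOn
  rw [List.filter_eq_self.mpr fun i hi => by simp [h i hi], List.map_map]
  exact List.map_congr_left fun i hi => by simp [h i hi]

theorem invPairsOn_range'_eq_append_cons {f : ℕ → ℕ} {s t m : ℕ} (h₁ : s ≤ m) (h₂ : m < s + t)
    (hfm : f m ≤ m) :
    invPairsOn f (List.range' s t) = invPairsOn f (List.range' s (m - s)) ++
      (f m + 1, m + 1) :: invPairsOn f (List.range' (m + 1) (s + t - (m + 1))) := by
  rw [range'_eq_append_cons h₁ h₂, invPairsOn_append, invPairsOn_cons_of_le hfm]

theorem mem_invPairsOn {f : ℕ → ℕ} {l : List ℕ} {q : ℕ × ℕ} :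
    q ∈ invPairsOn f l ↔ ∃ i ∈ l, f i ≤ i ∧ (f i + 1, i + 1) = q := by
  simp [invPairsOn, and_assoc]

theorem pairsAbove_invPairsOn_range' {f : ℕ → ℕ} {j s t : ℕ}
    (h : ∀ i, s ≤ i → i < s + t → f i ≤ i → j ≤ f i) :
    PairsAbove j (invPairsOn f (List.range' s t)) := by
  intro q hq
  obtain ⟨i, hi, hfi, rfl⟩ := mem_invPairsOn.mp hq
  rw [List.mem_range'_1] at hi
  exact ⟨Nat.lt_succ_of_le (h i hi.1 hi.2 hfi), Nat.succ_le_succ hfi⟩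

theorem rBSFold_diag (r : List ℕ) (T : List (List ℕ)) (l : List ℕ) :
    rBSFold (r :: T) (l.map fun a => (a, a)) = (r ++ l) :: T := by
  induction l generalizing r with
  | nil => simp
  | cons a l ih =>
    rw [List.map_cons, rBSFold_cons]
    simpa [rBS, addAtRow_cons_zero] using ih (r ++ [a])

theorem cBSFold_diag {T : List (List ℕ)} (hT : ∀ r ∈ T, r ≠ []) (l : List ℕ) :
    cBSFold T (l.map fun a => (a, a)) = T ++ l.map fun a => [a] := by
  induction l generalizing T with
  | nil => simp
  | cons a l ih =>
    have hstep : cBS T a a = T ++ [[a]] := by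
      have : T.findIdx (fun r => decide (r.length ≤ 0)) = T.length :=
        List.findIdx_eq_length.mpr fun r hr => by simpa using hT r hr
      rw [cBS, if_pos rfl, addAtCol, this, addAtRow, if_neg (lt_irrefl _)]
    rw [List.map_cons, cBSFold_cons, hstep]
    simpa using ih (T := T ++ [[a]]) fun r hr => by
      rcases List.mem_append.mp hr with hr | hr
      exacts [hT r hr, by simp at hr; simp [hr]]

theorem transposeT_hook (x : ℕ) (t l : List ℕ) :
    transposeT ((x :: t) :: l.map fun a => [a]) = (x :: l) :: t.map fun a => [a] := by
  rw [transposeT, List.headD_cons, List.length_cons, List.range_succ_eq_map]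
  simp only [List.map_cons, List.map_map, List.cons.injEq]
  constructor
  · simp [List.filterMap_map]
  · refine List.ext_getElem (by simp) fun i h₁ h₂ => ?_
    have : i < t.length := by simpa using h₂
    simp [List.filterMap_cons, List.filterMap_map, this]

theorem PrBSfn_eq_transposeT_of_forall_eq {f : ℕ → ℕ} {n : ℕ} (hf : ∀ i < n, f i = i) :
    PrBSfn f n = transposeT (PcBSfn f n) := by
  cases n with
  | zero => rfl
  | succ n =>
    have hpairs : invPairsFn f (n + 1) =
        (1, 1) :: ((List.range' 1 n).map (· + 1)).map fun a => (a, a) := by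
      rw [invPairsFn_eq_invPairsOn, List.range_eq_range', List.range'_succ,
        invPairsOn_cons_of_le (hf 0 (by omega)).le, hf 0 (by omega),
        invPairsOn_of_forall_eq fun i hi => by rw [List.mem_range'_1] at hi; exact hf i (by omega)]
    show rBSFold [] _ = transposeT (cBSFold [] _)
    rw [hpairs, rBSFold_cons, cBSFold_cons, show rBS [] 1 1 = [[1]] from rfl,
      show cBS [] 1 1 = [[1]] from rfl, rBSFold_diag, cBSFold_diag (by simp),
      List.singleton_append, List.singleton_append, transposeT_hook]
    rfl

theorem PrBSfn_eq_transposeT_of_swap {f : ℕ → ℕ} {n : ℕ} (hn : 2 ≤ n) (h0 : f 0 = 1)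
    (h1 : f 1 = 0) (hf : ∀ i, 2 ≤ i → i < n → f i = i) :
    PrBSfn f n = transposeT (PcBSfn f n) := by
  have hpairs : invPairsFn f n =
      (1, 2) :: ((List.range' 2 (n - 2)).map (· + 1)).map fun a => (a, a) := by
    rw [invPairsFn_eq_invPairsOn, range_eq_cons_cons hn, invPairsOn_cons_of_lt (by omega),
      invPairsOn_cons_of_le (by omega), h1,
      invPairsOn_of_forall_eq fun i hi => by
        rw [List.mem_range'_1] at hi; exact hf i hi.1 (by omega)]
  show rBSFold [] _ = transposeT (cBSFold [] _)
  rw [hpairs, rBSFold_cons, cBSFold_cons, show rBS [] 1 2 = [[1], [2]] from rfl,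
    show cBS [] 1 2 = [[1, 2]] from rfl, rBSFold_diag,
    cBSFold_diag (by simp), List.singleton_append, List.singleton_append, transposeT_hook]
  rfl

theorem PrBSfn_ne_transposeT_of_prefix {f : ℕ → ℕ} {n k : ℕ} (hk : 0 < k) (hkn : k < n)
    (hmaps : ∀ i < n, f i < n) (hinv : ∀ i < n, f (f i) = i) (hlow : ∀ i < k, f i < k)
    (hfk : f k ≠ k) (hsym : PrBSfn f k = transposeT (PcBSfn f k)) :
    PrBSfn f n ≠ transposeT (PcBSfn f n) := by
  have hfm : f (f k) = k := hinv k hkn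
  have hkm : k < f k := by
    rcases lt_or_gt_of_ne hfk with h | h
    · have := hlow _ h; omega
    · exact h
  have hmn : f k < n := hmaps k hkn
  have hbig : ∀ i, k ≤ i → i < n → i ≠ f k → f i ≤ i → k + 1 ≤ f i := by
    intro i hki hin him _
    by_contra! h
    rcases Nat.lt_succ_iff_lt_or_eq.mp h with h | h
    · have := hlow _ h; rw [hinv i hin] at this; omega
    · have := hinv i hin; rw [h] at this; exact him this.symm
  have hpairs : invPairsFn f n = invPairsFn f k ++ (invPairsOn f (List.range' k (f k - k)) ++
      (k + 1, f k + 1) :: invPairsOn f (List.range' (f k + 1) (n - (f k + 1)))) := by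
    rw [invPairsFn_eq_invPairsOn, List.range_eq_range',
      invPairsOn_range'_eq_append_cons (m := f k) (Nat.zero_le _) (by omega) (by omega), hfm,
      show f k - 0 = k + (f k - k) by omega, ← List.range'_append_1, invPairsOn_append,
      List.append_assoc, zero_add, zero_add, invPairsFn_eq_invPairsOn, List.range_eq_range']
  have hC : RowsIn (Set.Iio (k + 1)) (PcBSfn f k) := by
    refine RowsIn.cBSFold_of_mem (T := []) (by simp [RowsIn]) fun q hq => ?_
    obtain ⟨i, hi, hfi, rfl⟩ := mem_invPairsOn.mp hq
    simp only [List.mem_range] at hi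
    simp only [Set.mem_Iio]
    omega
  have hCne : PcBSfn f k ≠ [] := by
    refine cBSFold_ne_nil _ (List.ne_nil_of_mem (mem_invPairsOn.mpr ⟨k - 1, ?_, ?_, rfl⟩))
    · simp only [List.mem_range]; omega
    · have := hlow (k - 1) (by omega); omega
  show rBSFold [] _ ≠ transposeT (cBSFold [] _)
  rw [hpairs, rBSFold_append, cBSFold_append]
  exact rBSFold_ne_transposeT_of_eq_transposeT hsym hCne hC (by omega)
    (pairsAbove_invPairsOn_range' fun i h₁ h₂ => hbig i h₁ (by omega) (by omega))
    (pairsAbove_invPairsOn_range' fun i h₁ h₂ => hbig i (by omega) (by omega) (by omega))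

theorem PrBSfn_ne_transposeT_of_fixed_one {f : ℕ → ℕ} {n : ℕ} (hn : f 0 < n)
    (hinv : ∀ i < n, f (f i) = i) (h0 : 2 ≤ f 0) (h1 : f 1 = 1) :
    PrBSfn f n ≠ transposeT (PcBSfn f n) := by
  have hf0 : f (f 0) = 0 := hinv 0 (by omega)
  have hbig : ∀ i, 2 ≤ i → i < n → i ≠ f 0 → f i ≤ i → 2 ≤ f i := by
    intro i h2 hin hi _
    by_contra! h
    have := hinv i hin
    interval_cases f i <;> omega
  have hpairs : invPairsFn f n = (2, 2) :: (invPairsOn f (List.range' 2 (f 0 - 2)) ++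
      (1, f 0 + 1) :: invPairsOn f (List.range' (f 0 + 1) (2 + (n - 2) - (f 0 + 1)))) := by
    rw [invPairsFn_eq_invPairsOn, range_eq_cons_cons (by omega), invPairsOn_cons_of_lt (by omega),
      invPairsOn_cons_of_le (by omega), h1,
      invPairsOn_range'_eq_append_cons (m := f 0) h0 (by omega) (by omega), hf0]
  show rBSFold [] _ ≠ transposeT (cBSFold [] _)
  rw [hpairs]
  exact rBSFold_ne_transposeT_of_fixed_two (by omega)
    (pairsAbove_invPairsOn_range' fun i h₁ h₂ => hbig i h₁ (by omega) (by omega))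
    (pairsAbove_invPairsOn_range' fun i h₁ h₂ => hbig i (by omega) (by omega) (by omega))

theorem invPairsFn_eq_of_two_le_of_lt {f : ℕ → ℕ} {n lo hi : ℕ} (h2 : 2 ≤ lo) (hlh : lo < hi)
    (hhn : hi < n) (h0 : 0 < f 0) (h1 : 1 < f 1) (hlo : f lo ≤ lo) (hhi : f hi ≤ hi) :
    invPairsFn f n = invPairsOn f (List.range' 2 (lo - 2)) ++ (f lo + 1, lo + 1) ::
      (invPairsOn f (List.range' (lo + 1) (hi - (lo + 1))) ++ (f hi + 1, hi + 1) ::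
        invPairsOn f (List.range' (hi + 1) (n - (hi + 1)))) := by
  rw [invPairsFn_eq_invPairsOn, range_eq_cons_cons (by omega), invPairsOn_cons_of_lt h0,
    invPairsOn_cons_of_lt h1, invPairsOn_range'_eq_append_cons h2 (by omega) hlo,
    invPairsOn_range'_eq_append_cons (s := lo + 1) (t := 2 + (n - 2) - (lo + 1)) (m := hi)
      (by omega) (by omega) hhi,
    show lo + 1 + (2 + (n - 2) - (lo + 1)) - (hi + 1) = n - (hi + 1) by omega]

theorem PrBSfn_ne_transposeT_of_two_le {f : ℕ → ℕ} {n : ℕ} (hn₀ : f 0 < n) (hn₁ : f 1 < n)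
    (hinv : ∀ i < n, f (f i) = i) (h0 : 2 ≤ f 0) (h1 : 2 ≤ f 1) :
    PrBSfn f n ≠ transposeT (PcBSfn f n) := by
  have hf0 : f (f 0) = 0 := hinv 0 (by omega)
  have hf1 : f (f 1) = 1 := hinv 1 (by omega)
  have habove : ∀ s t, (∀ i, s ≤ i → i < s + t → 2 ≤ i ∧ i < n ∧ i ≠ f 0 ∧ i ≠ f 1) →
      PairsAbove 2 (invPairsOn f (List.range' s t)) := by
    refine fun s t hst => pairsAbove_invPairsOn_range' fun i h₁ h₂ _ => ?_
    obtain ⟨h2, hin, hi₀, hi₁⟩ := hst i h₁ h₂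
    by_contra! h
    have := hinv i hin
    interval_cases f i <;> omega
  show rBSFold [] _ ≠ transposeT (cBSFold [] _)
  rcases lt_or_gt_of_ne (show f 0 ≠ f 1 by intro h; rw [h, hf1] at hf0; omega) with h | h
  · rw [invPairsFn_eq_of_two_le_of_lt h0 h hn₁ (by omega) (by omega) (by omega) (by omega),
      hf0, hf1]
    exact rBSFold_ne_transposeT_of_one_before_two (by omega) (by omega)
      (habove _ _ fun i _ _ => by omega) (habove _ _ fun i _ _ => by omega)
      (habove _ _ fun i _ _ => by omega)
  · rw [invPairsFn_eq_of_two_le_of_lt h1 h hn₀ (by omega) (by omega) (by omega) (by omega),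
      hf0, hf1]
    exact rBSFold_ne_transposeT_of_two_before_one (by omega) (by omega)
      (habove _ _ fun i _ _ => by omega) (habove _ _ fun i _ _ => by omega)
      (habove _ _ fun i _ _ => by omega)

theorem PrBSfn_ne_transposeT_of_le_one {f : ℕ → ℕ} {n : ℕ} (hmaps : ∀ i < n, f i < n)
    (hinv : ∀ i < n, f (f i) = i) (h0 : f 0 ≤ 1) (hex : ∃ k, f 0 < k ∧ k < n ∧ f k ≠ k) :
    PrBSfn f n ≠ transposeT (PcBSfn f n) := by
  classical
  obtain ⟨hk0, hkn, hfk⟩ := Nat.find_spec hex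
  have hfix : ∀ i, f 0 < i → i < Nat.find hex → f i = i := by
    intro i h₁ h₂
    by_contra h
    exact Nat.find_min hex h₂ ⟨h₁, by omega, h⟩
  have hf1 : f 0 = 1 → f 1 = 0 := fun h => by simpa [h] using hinv 0 (by omega)
  have hlow : ∀ i < Nat.find hex, f i < Nat.find hex := by
    intro i hi
    rcases Nat.lt_or_ge (f 0) i with h | h
    · rwa [hfix i h hi]
    · have : i ≤ 1 := by omega
      interval_cases i
      · exact hk0
      · rw [hf1 (by omega)]; omega
  have hsym : PrBSfn f (Nat.find hex) = transposeT (PcBSfn f (Nat.find hex)) := by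
    rcases Nat.le_one_iff_eq_zero_or_eq_one.mp h0 with h | h
    · refine PrBSfn_eq_transposeT_of_forall_eq fun i hi => ?_
      rcases i with _ | i
      exacts [h, hfix _ (by omega) hi]
    · exact PrBSfn_eq_transposeT_of_swap (by omega) h (hf1 h) fun i h₂ hi => hfix i (by omega) hi
  exact PrBSfn_ne_transposeT_of_prefix (by omega) hkn hmaps hinv hlow hfk hsym

theorem PrBSfn_eq_transposeT_iff {f : ℕ → ℕ} {n : ℕ} (hmaps : ∀ i < n, f i < n)
    (hinv : ∀ i < n, f (f i) = i) :
    PrBSfn f n = transposeT (PcBSfn f n) ↔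
      (∀ i < n, f i = i) ∨ (2 ≤ n ∧ f 0 = 1 ∧ f 1 = 0 ∧ ∀ i, 2 ≤ i → i < n → f i = i) := by
  refine ⟨fun h => ?_, ?_⟩
  · by_contra hne
    rw [not_or] at hne
    have hn : 0 < n := by
      by_contra! hn
      exact hne.1 fun i hi => by omega
    rcases Nat.lt_or_ge (f 0) 2 with h0 | h0
    · refine PrBSfn_ne_transposeT_of_le_one hmaps hinv (by omega) ?_ h
      by_contra! hfix
      interval_cases hf : f 0
      · exact hne.1 fun i hi => by rcases i with _ | i; exacts [hf, hfix _ (by omega) hi]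
      · have := hmaps 0 hn
        exact hne.2 ⟨by omega, rfl, by simpa [hf] using hinv 0 hn,
          fun i h₂ hi => hfix i (by omega) hi⟩
    · have h1n : 1 < n := by have := hmaps 0 hn; omega
      rcases Nat.lt_or_ge (f 1) 2 with h1 | h1
      · refine PrBSfn_ne_transposeT_of_fixed_one (hmaps 0 hn) hinv h0 ?_ h
        have := hinv 1 h1n
        interval_cases hf : f 1 <;> omega
      · exact PrBSfn_ne_transposeT_of_two_le (hmaps 0 hn) (hmaps 1 h1n) hinv h0 h1 h
  · rintro (h | ⟨hn, h0, h1, h⟩)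
    · exact PrBSfn_eq_transposeT_of_forall_eq h
    · exact PrBSfn_eq_transposeT_of_swap hn h0 h1 h

theorem permFn_of_lt {n : ℕ} (z : Equiv.Perm (Fin n)) {i : ℕ} (h : i < n) :
    permFn z i = z ⟨i, h⟩ :=
  dif_pos h

theorem permFn_lt {n : ℕ} (z : Equiv.Perm (Fin n)) {i : ℕ} (h : i < n) : permFn z i < n := by
  rw [permFn_of_lt z h]
  exact (z _).isLt

theorem permFn_permFn {n : ℕ} {z : Equiv.Perm (Fin n)} (hz : z * z = 1) {i : ℕ} (h : i < n) :
    permFn z (permFn z i) = i := by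
  rw [permFn_of_lt z h, permFn_of_lt z (z _).isLt, Fin.eta, ← Equiv.Perm.mul_apply, hz]
  rfl

theorem forall_permFn_eq_iff {n : ℕ} {z : Equiv.Perm (Fin n)} :
    (∀ i < n, permFn z i = i) ↔ z = 1 := by
  refine ⟨fun h => Equiv.ext fun x => Fin.ext ?_, fun h i hi => ?_⟩
  · simpa [permFn_of_lt z x.isLt] using h x x.isLt
  · simp [h, permFn_of_lt _ hi]

theorem permFn_swap_iff {n : ℕ} {z : Equiv.Perm (Fin n)} :
    (2 ≤ n ∧ permFn z 0 = 1 ∧ permFn z 1 = 0 ∧ ∀ i, 2 ≤ i → i < n → permFn z i = i) ↔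
      ∃ h : 1 < n, z = Equiv.swap ⟨0, Nat.zero_lt_of_lt h⟩ ⟨1, h⟩ := by
  constructor
  · rintro ⟨hn, h0, h1, h⟩
    refine ⟨hn, Equiv.ext fun x => Fin.ext ?_⟩
    obtain ⟨_ | _ | i, hi⟩ := x
    · simpa [permFn_of_lt z (show 0 < n by omega)] using h0
    · simpa [permFn_of_lt z hn] using h1
    · rw [Equiv.swap_apply_of_ne_of_ne (by simp) (by simp)]
      simpa [permFn_of_lt z hi] using h _ (by omega) hi
  · rintro ⟨hn, rfl⟩
    refine ⟨hn, ?_, ?_, fun i h₂ hi => ?_⟩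
    · simp [permFn_of_lt _ (show 0 < n by omega)]
    · simp [permFn_of_lt _ hn]
    · rw [permFn_of_lt _ hi, Equiv.swap_apply_of_ne_of_ne] <;> simp [Fin.ext_iff] <;> omega

/-- the only involutions `w ∈ S_n` with
`P_rBS(w) = P_cBS(w)^⊤` are the identity and `(1,2)`. -/
theorem psi_fixed_points (n : ℕ) (w : Equiv.Perm (Fin n)) (hw : w * w = 1) :
    PrBS w = transposeT (PcBS w) ↔
      w = 1 ∨ ∃ h : 1 < n, w = Equiv.swap (⟨0, by omega⟩ : Fin n) ⟨1, h⟩ := by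
  rw [PrBS, PcBS, PrBSfn_eq_transposeT_iff (fun i => permFn_lt w) (fun i => permFn_permFn hw),
    forall_permFn_eq_iff, permFn_swap_iff]

end GelfandRSK
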